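/- Let L be a finite-dimensional complex Lie algebra with a nondegenerate symmetric ℂ-bilinear form B, let g be a real slice of (L,B), and let g̃ be a compact real form of (L,B). Then for every x ∈ g ∩ g̃ there exists a Cartan involution of Lie algebras θ : g → g of the restriction of B to g such that θ(x) = x. -/

import Mathlib

/-!
Setup: a finite-dimensional complex Lie algebra `L` with a nondegenerate symmetric
`ℂ`-bilinear form `B` (a "holomorphic inner product"), viewed also as a real Lie algebra.
-/

variable {L : Type*} [LieRing L] [LieAlgebra ℂ L]

/-- A complex Lie algebra is in particular a real Lie algebra. -/
noncomputable instance instLieAlgebraRealOfComplex : LieAlgebra ℝ L :=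
  { (inferInstance : Module ℝ L) with
    lie_smul := fun t x y => by
      rw [show t • y = (t : ℂ) • y from rfl, lie_smul,
        show (t : ℂ) • ⁅x, y⁆ = t • ⁅x, y⁆ from rfl] }

/-- `g` is a real form of the complex Lie algebra `L`:
`g ∩ i • g = {0}` and `g + i • g = L`. -/
def IsRealForm (g : LieSubalgebra ℝ L) : Prop :=
  (∀ x ∈ g, ∀ y ∈ g, x = Complex.I • y → x = 0) ∧
  (∀ z : L, ∃ x ∈ g, ∃ y ∈ g, z = x + Complex.I • y)

/-- `g` is a real slice of `(L, B)`: a real form of `L` on which `B` is real-valued. -/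
def IsRealSlice (B : LinearMap.BilinForm ℂ L) (g : LieSubalgebra ℝ L) : Prop :=
  IsRealForm g ∧ ∀ x ∈ g, ∀ y ∈ g, (B x y).im = 0

/-- A compact real form of `(L, B)`: a real slice on which `B` is positive definite. -/
def IsCompactRealForm (B : LinearMap.BilinForm ℂ L) (u : LieSubalgebra ℝ L) : Prop :=
  IsRealSlice B u ∧ ∀ x ∈ u, x ≠ 0 → 0 < (B x x).re

/-- A Cartan involution of the metric `B|g`: an `ℝ`-linear involution `θ` of `g` such that
`(x, y) ↦ B x (θ y)` is a positive-definite (real-valued, symmetric) inner product on `g`. -/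
def IsCartanInvolutionOfMetric (B : LinearMap.BilinForm ℂ L) (g : LieSubalgebra ℝ L)
    (θ : ↥g →ₗ[ℝ] ↥g) : Prop :=
  (∀ x, θ (θ x) = x) ∧
  (∀ x y : ↥g, B (θ x : L) (y : L) = B (x : L) (θ y : L)) ∧
  (∀ x : ↥g, x ≠ 0 → 0 < (B (x : L) (θ x : L)).re)

/-- A Cartan involution of Lie algebras of the metric `B|g`: a Cartan involution of the
metric which is moreover a Lie algebra automorphism of `g`. -/
def IsCartanInvolutionOfLieAlgebras (B : LinearMap.BilinForm ℂ L) (g : LieSubalgebra ℝ L)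
    (θ : ↥g →ₗ[ℝ] ↥g) : Prop :=
  IsCartanInvolutionOfMetric B g θ ∧ ∀ x y : ↥g, θ ⁅x, y⁆ = ⁅θ x, θ y⁆

/-!
Let `σ` and `τ` be the conjugations of `L` with respect to `g` and `g̃`. The operator `N = στ`
is a Lie algebra automorphism of `L` preserving `B`, it is self-adjoint for the inner product
`⟪z, w⟫ = Re B(z, τ w)`, and `σNσ = τNτ = N⁻¹`. Replacing `τ` by `τ' = |N| τ`
(which is `P^{1/4} τ P^{-1/4}` for the positive operator `P = N²`) gives again the conjugation of
a compact real form, now commuting with `σ`. Hence `τ'` preserves `g` and restricts to a Cartan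
involution of `g`, and it fixes every point fixed by both `σ` and `τ`, i.e. every point of
`g ∩ g̃`.
-/

open Complex

noncomputable def LieSubalgebra.iSmul (g : LieSubalgebra ℝ L) : Submodule ℝ L :=
  g.toSubmodule.map (I • LinearMap.id)

namespace IsRealForm

variable {g : LieSubalgebra ℝ L}

theorem isCompl_iSmul (hg : IsRealForm g) : IsCompl g.toSubmodule g.iSmul := by
  refine ⟨Submodule.disjoint_def.2 ?_, Submodule.codisjoint_iff_exists_add_eq.2 ?_⟩
  · rintro x hx ⟨y, hy, rfl⟩
    exact hg.1 _ hx y hy rfl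
  · intro z
    obtain ⟨x, hx, y, hy, rfl⟩ := hg.2 z
    exact ⟨x, I • y, hx, ⟨y, hy, rfl⟩, rfl⟩

noncomputable def conj (hg : IsRealForm g) : L →ₗ[ℝ] L :=
  LinearMap.ofIsCompl hg.isCompl_iSmul g.toSubmodule.subtype (-g.iSmul.subtype)

theorem conj_add_I_smul (hg : IsRealForm g) {x y : L} (hx : x ∈ g) (hy : y ∈ g) :
    hg.conj (x + I • y) = x - I • y := by
  have hIy : I • y ∈ g.iSmul := ⟨y, hy, rfl⟩
  rw [map_add, sub_eq_add_neg]
  exact congrArg₂ (· + ·) (LinearMap.ofIsCompl_apply_left _ ⟨x, hx⟩)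
    (LinearMap.ofIsCompl_apply_right _ ⟨_, hIy⟩)

theorem conj_apply_of_mem (hg : IsRealForm g) {x : L} (hx : x ∈ g) : hg.conj x = x := by
  simpa using hg.conj_add_I_smul hx g.zero_mem

theorem involutive_conj (hg : IsRealForm g) : Function.Involutive hg.conj := by
  intro z
  obtain ⟨x, hx, y, hy, rfl⟩ := hg.2 z
  rw [hg.conj_add_I_smul hx hy, sub_eq_add_neg, ← smul_neg, hg.conj_add_I_smul hx (neg_mem hy),
    smul_neg, sub_neg_eq_add]

theorem mem_of_conj_eq (hg : IsRealForm g) {z : L} (hz : hg.conj z = z) : z ∈ g := by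
  obtain ⟨x, hx, y, hy, rfl⟩ := hg.2 z
  have := IsAddTorsionFree.of_isTorsionFree ℂ L
  rw [hg.conj_add_I_smul hx hy, sub_eq_add_neg, add_right_inj, neg_eq_self] at hz
  simpa [hz] using hx

theorem conj_lie (hg : IsRealForm g) (z w : L) :
    hg.conj ⁅z, w⁆ = ⁅hg.conj z, hg.conj w⁆ := by
  obtain ⟨x, hx, y, hy, rfl⟩ := hg.2 z
  obtain ⟨u, hu, v, hv, rfl⟩ := hg.2 w
  have hbracket : ⁅x + I • y, u + I • v⁆ = (⁅x, u⁆ - ⁅y, v⁆) + I • (⁅x, v⁆ + ⁅y, u⁆) := by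
    simp only [lie_add, add_lie, lie_smul, smul_lie]
    match_scalars <;> simp
  rw [hbracket, hg.conj_add_I_smul (sub_mem (g.lie_mem hx hu) (g.lie_mem hy hv))
    (add_mem (g.lie_mem hx hv) (g.lie_mem hy hu)), hg.conj_add_I_smul hx hy,
    hg.conj_add_I_smul hu hv]
  simp only [lie_sub, sub_lie, lie_smul, smul_lie]
  match_scalars <;> simp

theorem mapsTo_of_commute (hg : IsRealForm g) {τ : L →ₗ[ℝ] L} (hcomm : Commute hg.conj τ) :
    ∀ x ∈ g, τ x ∈ g := fun x hx =>
  hg.mem_of_conj_eq (by rw [← Module.End.mul_apply, hcomm.eq, Module.End.mul_apply,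
    hg.conj_apply_of_mem hx])

end IsRealForm

/-- `σ` behaves like the conjugation of `L` with respect to a real slice of `(L, B)`. -/
structure IsConjugation (B : LinearMap.BilinForm ℂ L) (σ : L →ₗ[ℝ] L) : Prop where
  involutive : Function.Involutive σ
  map_lie : ∀ z w, σ ⁅z, w⁆ = ⁅σ z, σ w⁆
  apply_apply : ∀ z w, B (σ z) (σ w) = starRingEnd ℂ (B z w)

/-- `τ` behaves like the conjugation of `L` with respect to a compact real form of `(L, B)`. -/
structure IsCompactConjugation (B : LinearMap.BilinForm ℂ L) (τ : L →ₗ[ℝ] L) : Prop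
    extends IsConjugation B τ where
  re_apply_pos : ∀ z, z ≠ 0 → 0 < (B z (τ z)).re

theorem IsConjugation.re_apply_left {B : LinearMap.BilinForm ℂ L} {σ : L →ₗ[ℝ] L}
    (hσ : IsConjugation B σ) (z w : L) : (B (σ z) w).re = (B z (σ w)).re := by
  conv_lhs => rw [← hσ.involutive w, hσ.apply_apply, conj_re]

theorem IsRealSlice.isConjugation_conj {B : LinearMap.BilinForm ℂ L} {g : LieSubalgebra ℝ L}
    (hg : IsRealSlice B g) : IsConjugation B hg.1.conj where
  involutive := hg.1.involutive_conj
  map_lie := hg.1.conj_lie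
  apply_apply z w := by
    obtain ⟨x, hx, y, hy, rfl⟩ := hg.1.2 z
    obtain ⟨u, hu, v, hv, rfl⟩ := hg.1.2 w
    have hreal : ∀ a ∈ g, ∀ b ∈ g, starRingEnd ℂ (B a b) = B a b :=
      fun a ha b hb => conj_eq_iff_im.2 (hg.2 a ha b hb)
    simp only [hg.1.conj_add_I_smul hx hy, hg.1.conj_add_I_smul hu hv, map_add, map_sub,
      map_smul, LinearMap.add_apply, LinearMap.sub_apply, LinearMap.smul_apply, smul_eq_mul,
      map_mul, conj_I, hreal x hx u hu, hreal x hx v hv, hreal y hy u hu, hreal y hy v hv]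
    ring

theorem IsCompactRealForm.isCompactConjugation_conj {B : LinearMap.BilinForm ℂ L}
    (hB : ∀ x y : L, B x y = B y x) {u : LieSubalgebra ℝ L} (hu : IsCompactRealForm B u) :
    IsCompactConjugation B hu.1.1.conj where
  toIsConjugation := hu.1.isConjugation_conj
  re_apply_pos z hz := by
    obtain ⟨x, hx, y, hy, rfl⟩ := hu.1.1.2 z
    have hsum : B (x + I • y) (x - I • y) = B x x + B y y := by
      simp only [map_add, map_sub, map_smul, LinearMap.add_apply, LinearMap.smul_apply,
        smul_eq_mul, hB y x]
      linear_combination (-B y y) * I_sq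
    have hnonneg : ∀ a ∈ u, 0 ≤ (B a a).re := fun a ha => by
      rcases eq_or_ne a 0 with rfl | ha0
      · simp
      · exact (hu.2 a ha ha0).le
    rw [hu.1.1.conj_add_I_smul hx hy, hsum, add_re]
    rcases eq_or_ne x 0 with rfl | hx0
    · have hy0 : y ≠ 0 := by rintro rfl; simp at hz
      simpa using hu.2 y hy hy0
    · linarith [hu.2 x hx hx0, hnonneg y hy]

open scoped RealInnerProductSpace

namespace LinearMap.IsSymmetric

variable {E : Type*} [NormedAddCommGroup E] [InnerProductSpace ℝ E] [FiniteDimensional ℝ E]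
  {T : E →ₗ[ℝ] E}

noncomputable def funCalc (hT : T.IsSymmetric) (f : ℝ → ℝ) : E →ₗ[ℝ] E :=
  (hT.eigenvectorBasis rfl).toBasis.constr ℝ
    fun i => f (hT.eigenvalues rfl i) • hT.eigenvectorBasis rfl i

theorem funCalc_apply (hT : T.IsSymmetric) (f : ℝ → ℝ) (v : E) :
    hT.funCalc f v = ∑ i, (f (hT.eigenvalues rfl i) * ⟪hT.eigenvectorBasis rfl i, v⟫) •
      hT.eigenvectorBasis rfl i := by
  simp [funCalc, OrthonormalBasis.repr_apply_apply, smul_smul, mul_comm]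

theorem inner_eigenvectorBasis_funCalc (hT : T.IsSymmetric) (f : ℝ → ℝ) (i) (v : E) :
    ⟪hT.eigenvectorBasis rfl i, hT.funCalc f v⟫ =
      f (hT.eigenvalues rfl i) * ⟪hT.eigenvectorBasis rfl i, v⟫ := by
  rw [funCalc_apply, (hT.eigenvectorBasis rfl).orthonormal.inner_right_fintype]

theorem apply_eigenvectorBasis_real (hT : T.IsSymmetric) (i) :
    T (hT.eigenvectorBasis rfl i) = hT.eigenvalues rfl i • hT.eigenvectorBasis rfl i := by
  simp [hT.apply_eigenvectorBasis rfl i]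

theorem eigenvalues_eq_of_inner_ne_zero (hT : T.IsSymmetric) {c : ℝ} {v : E}
    (hv : T v = c • v) {i} (hi : ⟪hT.eigenvectorBasis rfl i, v⟫ ≠ 0) :
    hT.eigenvalues rfl i = c := by
  have h := hT (hT.eigenvectorBasis rfl i) v
  rw [apply_eigenvectorBasis_real, hv, real_inner_smul_left, real_inner_smul_right] at h
  exact mul_right_cancel₀ hi h

theorem funCalc_apply_of_apply_eq_smul (hT : T.IsSymmetric) (f : ℝ → ℝ) {c : ℝ} {v : E}
    (hv : T v = c • v) : hT.funCalc f v = f c • v := by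
  refine (hT.eigenvectorBasis rfl).toBasis.ext_elem fun i => ?_
  simp only [OrthonormalBasis.coe_toBasis_repr_apply, OrthonormalBasis.repr_apply_apply,
    inner_eigenvectorBasis_funCalc, real_inner_smul_right]
  rcases eq_or_ne ⟪hT.eigenvectorBasis rfl i, v⟫ 0 with h | h
  · simp [h]
  · rw [hT.eigenvalues_eq_of_inner_ne_zero hv h]

theorem ext_of_eigenvectors {F : Type*} [AddCommGroup F] [Module ℝ F] (hT : T.IsSymmetric)
    {A C : E →ₗ[ℝ] F} (h : ∀ (c : ℝ) (v : E), v ≠ 0 → T v = c • v → A v = C v) : A = C :=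
  (hT.eigenvectorBasis rfl).toBasis.ext fun i => by
    simpa using
      h _ _ ((hT.eigenvectorBasis rfl).toBasis.ne_zero i) (hT.apply_eigenvectorBasis_real i)

theorem ext₂_of_eigenvectors {F : Type*} [AddCommGroup F] [Module ℝ F] (hT : T.IsSymmetric)
    {Φ Ψ : E →ₗ[ℝ] E →ₗ[ℝ] F}
    (h : ∀ (a b : ℝ) (u v : E), T u = a • u → T v = b • v → Φ u v = Ψ u v) : Φ = Ψ :=
  LinearMap.ext_basis (hT.eigenvectorBasis rfl).toBasis (hT.eigenvectorBasis rfl).toBasis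
    fun i j => by
      simpa using h _ _ _ _ (hT.apply_eigenvectorBasis_real i) (hT.apply_eigenvectorBasis_real j)

theorem inner_funCalc_self_pos (hT : T.IsSymmetric) {f : ℝ → ℝ}
    (hf : ∀ (c : ℝ) (v : E), v ≠ 0 → T v = c • v → 0 < f c) {v : E} (hv : v ≠ 0) :
    0 < ⟪v, hT.funCalc f v⟫ := by
  set b := hT.eigenvectorBasis rfl
  have hsum : ⟪v, hT.funCalc f v⟫ = ∑ i, f (hT.eigenvalues rfl i) * ⟪b i, v⟫ ^ 2 := by
    rw [← b.sum_inner_mul_inner]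
    refine Finset.sum_congr rfl fun i _ => ?_
    rw [inner_eigenvectorBasis_funCalc, real_inner_comm]
    ring
  obtain ⟨i, hi⟩ : ∃ i, ⟪b i, v⟫ ≠ 0 := by
    by_contra! h
    exact hv (by simpa [h] using (b.sum_repr' v).symm)
  have hpos : ∀ j, 0 < f (hT.eigenvalues rfl j) := fun j =>
    hf _ _ (b.toBasis.ne_zero j) (hT.apply_eigenvectorBasis_real j)
  rw [hsum]
  exact Finset.sum_pos' (fun j _ => mul_nonneg (hpos j).le (sq_nonneg _))
    ⟨i, Finset.mem_univ _, mul_pos (hpos i) (by positivity)⟩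

theorem funCalc_map₂ (hT : T.IsSymmetric) {Φ : E →ₗ[ℝ] E →ₗ[ℝ] E}
    (hΦ : ∀ u v, T (Φ u v) = Φ (T u) (T v)) {f : ℝ → ℝ} (hf : ∀ a b, f (a * b) = f a * f b)
    (u v : E) : hT.funCalc f (Φ u v) = Φ (hT.funCalc f u) (hT.funCalc f v) := by
  have key : Φ.compr₂ (hT.funCalc f) = (Φ.compl₂ (hT.funCalc f)).comp (hT.funCalc f) :=
    hT.ext₂_of_eigenvectors fun a b u v hu hv => by
      have huv : T (Φ u v) = (a * b) • Φ u v := by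
        rw [hΦ, hu, hv, map_smul, map_smul, LinearMap.smul_apply, smul_smul, mul_comm]
      simp only [compr₂_apply, compl₂_apply, comp_apply, funCalc_apply_of_apply_eq_smul _ _ hu,
        funCalc_apply_of_apply_eq_smul _ _ hv, funCalc_apply_of_apply_eq_smul _ _ huv, hf,
        map_smul, LinearMap.smul_apply, smul_smul]
  exact LinearMap.congr_fun₂ key u v

theorem map₂_funCalc {F : Type*} [AddCommGroup F] [Module ℝ F] (hT : T.IsSymmetric)
    {Φ : E →ₗ[ℝ] E →ₗ[ℝ] F} (hΦ : ∀ u v, Φ (T u) (T v) = Φ u v) {f : ℝ → ℝ}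
    (hf : ∀ a b, a * b = 1 → f a * f b = 1) (u v : E) :
    Φ (hT.funCalc f u) (hT.funCalc f v) = Φ u v := by
  have key : (Φ.compl₂ (hT.funCalc f)).comp (hT.funCalc f) = Φ :=
    hT.ext₂_of_eigenvectors fun a b u v hu hv => by
      simp only [compl₂_apply, comp_apply, funCalc_apply_of_apply_eq_smul _ _ hu,
        funCalc_apply_of_apply_eq_smul _ _ hv, map_smul, LinearMap.smul_apply, smul_smul]
      have h := hΦ u v
      rw [hu, hv, map_smul, map_smul, LinearMap.smul_apply, smul_smul, mul_comm] at h
      rcases eq_or_ne (a * b) 1 with hab | hab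
      · rw [hf a b hab, one_smul]
      · have h0 : Φ u v = 0 := by
          have h' : (a * b - 1) • Φ u v = 0 := by rw [sub_smul, one_smul, h, sub_self]
          exact (smul_eq_zero.1 h').resolve_left (sub_ne_zero.2 hab)
        simp [h0]
  exact LinearMap.congr_fun₂ key u v

theorem apply_funCalc_of_inverting (hT : T.IsSymmetric) {τ : E →ₗ[ℝ] E}
    (hτ : ∀ (c : ℝ) v, T v = c • v → T (τ v) = c⁻¹ • τ v) (f : ℝ → ℝ) (v : E) :
    τ (hT.funCalc f v) = hT.funCalc (fun x => f x⁻¹) (τ v) := by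
  have key : τ ∘ₗ hT.funCalc f = hT.funCalc (fun x => f x⁻¹) ∘ₗ τ :=
    hT.ext_of_eigenvectors fun c v _ hv => by
      simp only [comp_apply, funCalc_apply_of_apply_eq_smul _ _ hv,
        funCalc_apply_of_apply_eq_smul _ _ (hτ c v hv), inv_inv, map_smul]
  exact LinearMap.congr_fun key v

end LinearMap.IsSymmetric

namespace LinearMap

section Involutions

variable {K M : Type*} [Field K] [AddCommGroup M] [Module K M] {σ τ : M →ₗ[K] M} {c : K}
  {v : M}

theorem apply_eq_inv_smul_of_comp_apply_eq_smul (hσ : Function.Involutive σ)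
    (hτ : Function.Involutive τ) (hv : (σ ∘ₗ τ) v = c • v) : σ v = c⁻¹ • τ v := by
  have hτv : τ v = c • σ v := by rw [← map_smul, ← hv, comp_apply, hσ]
  rcases eq_or_ne c 0 with rfl | hc
  · have hv0 : v = 0 := by rw [← hτ v, hτv, zero_smul, map_zero]
    simp [hv0]
  · rw [hτv, smul_smul, inv_mul_cancel₀ hc, one_smul]

theorem apply_apply_eq_inv_smul_of_comp_apply_eq_smul (hσ : Function.Involutive σ)
    (hτ : Function.Involutive τ) (hv : (σ ∘ₗ τ) v = c • v) : τ (σ v) = c⁻¹ • v := by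
  rw [apply_eq_inv_smul_of_comp_apply_eq_smul hσ hτ hv, map_smul, hτ]

theorem comp_apply_right_eq_inv_smul (hσ : Function.Involutive σ)
    (hτ : Function.Involutive τ) (hv : (σ ∘ₗ τ) v = c • v) :
    (σ ∘ₗ τ) (τ v) = c⁻¹ • τ v := by
  rw [comp_apply, hτ, apply_eq_inv_smul_of_comp_apply_eq_smul hσ hτ hv]

theorem comp_apply_left_eq_inv_smul (hσ : Function.Involutive σ)
    (hτ : Function.Involutive τ) (hv : (σ ∘ₗ τ) v = c • v) :
    (σ ∘ₗ τ) (σ v) = c⁻¹ • σ v := by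
  rw [comp_apply, apply_apply_eq_inv_smul_of_comp_apply_eq_smul hσ hτ hv, map_smul]

theorem ne_zero_of_comp_apply_eq_smul (hσ : Function.Involutive σ)
    (hτ : Function.Involutive τ) (hv0 : v ≠ 0) (hv : (σ ∘ₗ τ) v = c • v) : c ≠ 0 := by
  rintro rfl
  rw [zero_smul, comp_apply, ← map_zero σ, hσ.injective.eq_iff, ← map_zero τ,
    hτ.injective.eq_iff] at hv
  exact hv0 hv

end Involutions

namespace IsSymmetric

variable {E : Type*} [NormedAddCommGroup E] [InnerProductSpace ℝ E] [FiniteDimensional ℝ E]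
  {σ τ : E →ₗ[ℝ] E}

theorem apply_funCalc_abs_apply (hσ : Function.Involutive σ) (hτ : Function.Involutive τ)
    (hT : (σ ∘ₗ τ).IsSymmetric) (z : E) :
    τ (hT.funCalc (|·|) (τ z)) = hT.funCalc (fun x => |x⁻¹|) z := by
  rw [hT.apply_funCalc_of_inverting fun _ _ => comp_apply_right_eq_inv_smul hσ hτ, hτ]

theorem involutive_funCalc_abs_comp (hσ : Function.Involutive σ) (hτ : Function.Involutive τ)
    (hT : (σ ∘ₗ τ).IsSymmetric) : Function.Involutive (hT.funCalc (|·|) ∘ₗ τ) := by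
  have key : hT.funCalc (|·|) ∘ₗ hT.funCalc (fun x => |x⁻¹|) = LinearMap.id :=
    hT.ext_of_eigenvectors fun c v hv0 hv => by
      rw [comp_apply, hT.funCalc_apply_of_apply_eq_smul _ hv, map_smul,
        hT.funCalc_apply_of_apply_eq_smul _ hv, smul_smul, abs_inv,
        inv_mul_cancel₀ (abs_ne_zero.2 (ne_zero_of_comp_apply_eq_smul hσ hτ hv0 hv)), one_smul,
        id_apply]
  intro z
  rw [comp_apply, comp_apply, hT.apply_funCalc_abs_apply hσ hτ, ← comp_apply (f := hT.funCalc _),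
    key, id_apply]

theorem commute_funCalc_abs_comp (hσ : Function.Involutive σ) (hτ : Function.Involutive τ)
    (hT : (σ ∘ₗ τ).IsSymmetric) : Commute σ (hT.funCalc (|·|) ∘ₗ τ) := by
  have key : hT.funCalc (fun x => |x⁻¹|) ∘ₗ (σ ∘ₗ τ) = hT.funCalc (|·|) ∘ₗ τ ∘ₗ σ :=
    hT.ext_of_eigenvectors fun c v hv0 hv => by
      have hc := ne_zero_of_comp_apply_eq_smul hσ hτ hv0 hv
      have hv' : σ (τ v) = c • v := hv
      rw [comp_apply, comp_apply, comp_apply, comp_apply, hv',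
        apply_apply_eq_inv_smul_of_comp_apply_eq_smul hσ hτ hv, map_smul, map_smul,
        hT.funCalc_apply_of_apply_eq_smul _ hv, hT.funCalc_apply_of_apply_eq_smul _ hv,
        smul_smul, smul_smul]
      congr 1
      rcases abs_choice c with h | h <;> rw [abs_inv, h] <;> field_simp
  ext z
  rw [Module.End.mul_apply, comp_apply,
    hT.apply_funCalc_of_inverting (fun _ _ => comp_apply_left_eq_inv_smul hσ hτ)]
  exact LinearMap.congr_fun key z

theorem inner_apply_funCalc_abs_apply_pos (hσ : Function.Involutive σ)
    (hτ : Function.Involutive τ) (hT : (σ ∘ₗ τ).IsSymmetric) {z : E} (hz : z ≠ 0) :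
    0 < ⟪z, τ (hT.funCalc (|·|) (τ z))⟫ := by
  rw [hT.apply_funCalc_abs_apply hσ hτ]
  exact hT.inner_funCalc_self_pos
    (fun c v hv0 hv => abs_pos.2 (inv_ne_zero (ne_zero_of_comp_apply_eq_smul hσ hτ hv0 hv))) hz

end IsSymmetric

end LinearMap

namespace IsCompactConjugation

variable {B : LinearMap.BilinForm ℂ L} {σ τ : L →ₗ[ℝ] L}

@[reducible] noncomputable def innerCore (hB : ∀ x y : L, B x y = B y x)
    (hτ : IsCompactConjugation B τ) : InnerProductSpace.Core ℝ L where
  inner z w := (B z (τ w)).re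
  conj_inner_symm z w := by
    rw [starRingEnd_apply, star_trivial, hB, hτ.re_apply_left]
  re_inner_nonneg z := by
    rcases eq_or_ne z 0 with rfl | hz
    · simp
    · exact (hτ.re_apply_pos z hz).le
  definite z hz := by
    by_contra h
    exact (hτ.re_apply_pos z h).ne' hz
  add_left _ _ _ := by simp only [map_add, LinearMap.add_apply, add_re]
  smul_left z w r := by
    rw [starRingEnd_apply, star_trivial, ← Complex.coe_smul, map_smul, LinearMap.smul_apply,
      smul_eq_mul, re_ofReal_mul]

open LinearMap in
theorem exists_commute [FiniteDimensional ℝ L] (hB : ∀ x y : L, B x y = B y x)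
    (hσ : IsConjugation B σ) (hτ : IsCompactConjugation B τ) :
    ∃ τ' : L →ₗ[ℝ] L, IsCompactConjugation B τ' ∧ Commute σ τ' ∧
      ∀ z, σ z = z → τ z = z → τ' z = z := by
  let _ := (hτ.innerCore hB).toNormedAddCommGroup
  let _ : InnerProductSpace ℝ L := .ofCore (hτ.innerCore hB).toCore
  have hinner : ∀ z w : L, ⟪z, w⟫ = (B z (τ w)).re := fun _ _ => rfl
  have hN : (σ ∘ₗ τ).IsSymmetric := fun z w => by
    simp only [hinner, comp_apply, hσ.re_apply_left, hτ.re_apply_left]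
  refine ⟨hN.funCalc (|·|) ∘ₗ τ, ⟨⟨hN.involutive_funCalc_abs_comp hσ.involutive hτ.involutive,
    fun z w => ?_, fun z w => ?_⟩, fun z hz => ?_⟩,
    hN.commute_funCalc_abs_comp hσ.involutive hτ.involutive, fun z hσz hτz => ?_⟩
  · rw [comp_apply, hτ.map_lie]
    exact hN.funCalc_map₂ (Φ := (LieModule.toEnd ℝ L L : L →ₗ[ℝ] Module.End ℝ L))
      (by simp [hσ.map_lie, hτ.map_lie]) abs_mul _ _
  · rw [comp_apply, comp_apply, ← hτ.apply_apply]
    exact hN.map₂_funCalc (Φ := B.restrictScalars₁₂ ℝ ℝ)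
      (by simp [hσ.apply_apply, hτ.apply_apply])
      (fun a b hab => by rw [← abs_mul, hab, abs_one]) _ _
  · have h := hN.inner_apply_funCalc_abs_apply_pos hσ.involutive hτ.involutive hz
    rwa [hinner, hτ.involutive] at h
  · have hz : (σ ∘ₗ τ) z = (1 : ℝ) • z := by rw [comp_apply, hτz, hσz, one_smul]
    rw [comp_apply, hτz, hN.funCalc_apply_of_apply_eq_smul _ hz, abs_one, one_smul]

theorem isCartanInvolutionOfLieAlgebras_restrict {g : LieSubalgebra ℝ L}
    (hg : IsRealSlice B g) (hτ : IsCompactConjugation B τ) (hmaps : ∀ x ∈ g, τ x ∈ g) :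
    IsCartanInvolutionOfLieAlgebras B g (τ.restrict hmaps) := by
  refine ⟨⟨fun x => Subtype.ext (hτ.involutive x), fun x y => ?_, fun x hx => ?_⟩,
    fun x y => Subtype.ext (hτ.map_lie x y)⟩
  · change B (τ x) y = B x (τ y)
    rw [← hτ.involutive y, hτ.apply_apply, hτ.involutive,
      conj_eq_iff_im.2 (hg.2 _ x.2 _ (hmaps _ y.2))]
  · exact hτ.re_apply_pos x (by simpa using hx)

end IsCompactConjugation

theorem exists_cartanInvolution_fixing_mem_inter_general [FiniteDimensional ℂ L]
    (B : LinearMap.BilinForm ℂ L) (hBsymm : ∀ x y : L, B x y = B y x)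
    (g g' : LieSubalgebra ℝ L)
    (hg : IsRealSlice B g) (hg' : IsCompactRealForm B g') :
    ∀ x : ↥g, (x : L) ∈ g' →
      ∃ θ : ↥g →ₗ[ℝ] ↥g, IsCartanInvolutionOfLieAlgebras B g θ ∧ θ x = x := by
  intro x hx
  have : FiniteDimensional ℝ L := Module.Finite.trans ℂ L
  obtain ⟨τ, hτ, hcomm, hfix⟩ :=
    IsCompactConjugation.exists_commute hBsymm hg.isConjugation_conj
      (hg'.isCompactConjugation_conj hBsymm)
  have hmaps := hg.1.mapsTo_of_commute hcomm
  exact ⟨τ.restrict hmaps, hτ.isCartanInvolutionOfLieAlgebras_restrict hg hmaps,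
    Subtype.ext (hfix x (hg.1.conj_apply_of_mem x.2) (hg'.1.1.conj_apply_of_mem hx))⟩

/-- If `g` is a real slice of `(L, B)` and `g̃` is a compact real form of
`(L, B)`, then every `x ∈ g ∩ g̃` is fixed by some Cartan involution of Lie algebras of
`B|g`. -/
theorem exists_cartanInvolution_fixing_mem_inter [FiniteDimensional ℂ L]
    (B : LinearMap.BilinForm ℂ L) (hBsymm : ∀ x y : L, B x y = B y x)
    (hBnd : B.Nondegenerate) (g g' : LieSubalgebra ℝ L)
    (hg : IsRealSlice B g) (hg' : IsCompactRealForm B g') :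
    ∀ x : ↥g, (x : L) ∈ g' →
      ∃ θ : ↥g →ₗ[ℝ] ↥g, IsCartanInvolutionOfLieAlgebras B g θ ∧ θ x = x :=
  exists_cartanInvolution_fixing_mem_inter_general B hBsymm g g' hg hg'
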